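/- arXiv:1802.05852 — 4 statements merged into one kernel-verified Lean document; each statement's English description precedes it below -/
import Mathlib

section
/- Let μ > 0, n₀ > 0, and let φ_w ≤ φ ≤ 0 be real numbers. Then ∫_{−√((2/μ)(φ−φ_w))}^{∞} n₀·√(2μ/π)·exp(φ − μv²/2) dv = (2n₀/√(2π))·[√(2π)·e^{φ} − ∫_{√(−2φ_w)}^{∞} e^{−v²/2}·v/√(v² + 2φ) dv]. (The electron density of the stationary sheath solution at a point with potential value φ equals the electron term in the nonlinear Poisson equation.) -/
/-!
Writing `exp (φ - μ v² / 2) = e^φ · exp (-(μ/2) v²)`, the left-hand side is a Gaussian integral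
over `(-a, ∞)` with `a = √((2/μ)(φ - φw))`; by evenness it is the full Gaussian integral
`√(2π/μ)` minus the tail over `(a, ∞)`. The substitution `v = √(μ u² - 2φ)` maps `(a, ∞)` onto
`(√(-2φw), ∞)` and turns the integral on the right-hand side into `√μ · e^φ` times that same tail.
-/

open MeasureTheory Set

theorem integral_Ioi_neg_eq_integral_sub_integral_Ioi {E : Type*} [NormedAddCommGroup E]
    [NormedSpace ℝ E] [CompleteSpace E] {f : ℝ → E} (hf : Integrable f)
    (heven : ∀ x, f (-x) = f x) (a : ℝ) :
    ∫ x in Ioi (-a), f x = (∫ x, f x) - ∫ x in Ioi a, f x := by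
  have hIic : ∫ x in Iic (-a), f x = ∫ x in Ioi a, f x := by
    simp only [← integral_comp_neg_Ioi, heven]
  rw [← intervalIntegral.integral_Iic_add_Ioi hf.integrableOn hf.integrableOn, hIic]
  abel

theorem integral_Ioi_neg_gaussian {b : ℝ} (hb : 0 < b) (a : ℝ) :
    ∫ x in Ioi (-a), Real.exp (-b * x ^ 2) =
      Real.sqrt (Real.pi / b) - ∫ x in Ioi a, Real.exp (-b * x ^ 2) := by
  rw [integral_Ioi_neg_eq_integral_sub_integral_Ioi (integrable_exp_neg_mul_sq hb)
    (fun x => by rw [neg_sq]), integral_gaussian]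

section SqrtSubstitution

variable {c κ a : ℝ}

theorem hasDerivAt_sqrt_mul_sq_add {u : ℝ} (hu : c * u ^ 2 + κ ≠ 0) :
    HasDerivAt (fun u => Real.sqrt (c * u ^ 2 + κ)) (c * u / Real.sqrt (c * u ^ 2 + κ)) u := by
  have hinner : HasDerivAt (fun u => c * u ^ 2 + κ) (c * (2 * u)) u := by
    simpa using ((hasDerivAt_pow 2 u).const_mul c).add_const κ
  convert (hinner.sqrt hu) using 1
  field_simp

theorem strictMonoOn_sqrt_mul_sq_add (hc : 0 < c) (ha : 0 ≤ a) (hκ : 0 ≤ c * a ^ 2 + κ) :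
    StrictMonoOn (fun u => Real.sqrt (c * u ^ 2 + κ)) (Ici a) := by
  intro u (hau : a ≤ u) v _ huv
  have hu : 0 ≤ u := ha.trans hau
  have hau2 : c * a ^ 2 ≤ c * u ^ 2 := by gcongr
  have huv2 : c * u ^ 2 < c * v ^ 2 := by gcongr
  exact Real.sqrt_lt_sqrt (by linarith) (by linarith)

theorem image_sqrt_mul_sq_add_Ioi (hc : 0 < c) (ha : 0 ≤ a) (hκ : 0 ≤ c * a ^ 2 + κ) :
    (fun u => Real.sqrt (c * u ^ 2 + κ)) '' Ioi a = Ioi (Real.sqrt (c * a ^ 2 + κ)) := by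
  refine Subset.antisymm ?_ fun y hy => ?_
  · rintro _ ⟨u, hu, rfl⟩
    exact strictMonoOn_sqrt_mul_sq_add hc ha hκ self_mem_Ici (mem_Ici_of_Ioi hu) hu
  have hy0 : 0 < y := (Real.sqrt_nonneg _).trans_lt hy
  have hy2 : c * a ^ 2 + κ < y ^ 2 := (Real.sqrt_lt' hy0).mp hy
  have hca : 0 ≤ c * a ^ 2 := by positivity
  refine ⟨Real.sqrt ((y ^ 2 - κ) / c), ?_, ?_⟩
  · rw [mem_Ioi, Real.lt_sqrt ha, lt_div_iff₀ hc]
    linarith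
  · dsimp only
    rw [Real.sq_sqrt (div_nonneg (by linarith) hc.le), mul_div_cancel₀ _ hc.ne', sub_add_cancel,
      Real.sqrt_sq hy0.le]

theorem integral_Ioi_sqrt_mul_sq_add_eq {F : Type*} [NormedAddCommGroup F] [NormedSpace ℝ F]
    (hc : 0 < c) (ha : 0 ≤ a) (hκ : 0 ≤ c * a ^ 2 + κ) (g : ℝ → F) :
    ∫ v in Ioi (Real.sqrt (c * a ^ 2 + κ)), g v =
      ∫ u in Ioi a, (c * u / Real.sqrt (c * u ^ 2 + κ)) • g (Real.sqrt (c * u ^ 2 + κ)) := by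
  have hpos : ∀ u ∈ Ioi a, 0 < c * u ^ 2 + κ := fun u hu => by
    have : c * a ^ 2 < c * u ^ 2 := mul_lt_mul_of_pos_left (pow_lt_pow_left₀ hu ha two_ne_zero) hc
    linarith
  rw [← image_sqrt_mul_sq_add_Ioi hc ha hκ, integral_image_eq_integral_abs_deriv_smul
    measurableSet_Ioi (fun u hu => (hasDerivAt_sqrt_mul_sq_add (hpos u hu).ne').hasDerivWithinAt)
    ((strictMonoOn_sqrt_mul_sq_add hc ha hκ).injOn.mono Ioi_subset_Ici_self)]
  refine setIntegral_congr_fun measurableSet_Ioi fun u hu => ?_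
  have := hpos u hu
  have hu0 : 0 < u := ha.trans_lt hu
  rw [abs_of_pos (by positivity)]

end SqrtSubstitution

theorem integral_Ioi_exp_mul_div_sqrt_eq_gaussian_tail {μ φw φ : ℝ} (hμ : 0 < μ) (hφw : φw ≤ φ) (hφ : φ ≤ 0) :
    ∫ v in Ioi (Real.sqrt (-2 * φw)), Real.exp (-(v ^ 2) / 2) * v / Real.sqrt (v ^ 2 + 2 * φ) =
      Real.sqrt μ * Real.exp φ *
        ∫ u in Ioi (Real.sqrt ((2 / μ) * (φ - φw))), Real.exp (-(μ / 2) * u ^ 2) := by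
  set a := Real.sqrt ((2 / μ) * (φ - φw))
  have ha : 0 ≤ a := Real.sqrt_nonneg _
  have hμa : μ * a ^ 2 + -2 * φ = -2 * φw := by
    rw [Real.sq_sqrt (by have := sub_nonneg.mpr hφw; positivity)]
    field_simp
    ring
  rw [← hμa, integral_Ioi_sqrt_mul_sq_add_eq hμ ha (by linarith), ← integral_const_mul]
  refine setIntegral_congr_fun measurableSet_Ioi fun u (hu : a < u) => ?_
  have hu0 : 0 < u := ha.trans_lt hu
  have hr : 0 < μ * u ^ 2 + -2 * φ := add_pos_of_pos_of_nonneg (by positivity) (by linarith)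
  have hs : 0 < Real.sqrt (μ * u ^ 2 + -2 * φ) := Real.sqrt_pos.mpr hr
  rw [smul_eq_mul, Real.sq_sqrt hr.le, show μ * u ^ 2 + -2 * φ + 2 * φ = μ * u ^ 2 by ring,
    Real.sqrt_mul hμ.le, Real.sqrt_sq hu0.le,
    show -(μ * u ^ 2 + -2 * φ) / 2 = φ + -(μ / 2) * u ^ 2 by ring, Real.exp_add]
  have hμs : 0 < Real.sqrt μ := Real.sqrt_pos.mpr hμ
  generalize Real.sqrt (μ * u ^ 2 + -2 * φ) = s at hs ⊢
  field_simp
  rw [Real.sq_sqrt hμ.le]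

theorem electron_density_identity_general
    (μ n₀ φw φ : ℝ) (hμ : 0 < μ) (hφw : φw ≤ φ) (hφ : φ ≤ 0) :
    ∫ v in Ioi (-Real.sqrt ((2 / μ) * (φ - φw))),
        n₀ * Real.sqrt (2 * μ / Real.pi) * Real.exp (φ - μ * v ^ 2 / 2) =
      (2 * n₀ / Real.sqrt (2 * Real.pi)) *
        (Real.sqrt (2 * Real.pi) * Real.exp φ -
          ∫ v in Ioi (Real.sqrt (-2 * φw)),
            Real.exp (-(v ^ 2) / 2) * v / Real.sqrt (v ^ 2 + 2 * φ)) := by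
  have hsplit : ∀ v : ℝ, Real.exp (φ - μ * v ^ 2 / 2) = Real.exp φ * Real.exp (-(μ / 2) * v ^ 2) :=
    fun v => by rw [← Real.exp_add]; ring_nf
  simp_rw [hsplit, ← mul_assoc]
  rw [integral_const_mul, integral_Ioi_neg_gaussian (half_pos hμ),
    integral_Ioi_exp_mul_div_sqrt_eq_gaussian_tail hμ hφw hφ]
  have hnorm : Real.sqrt (2 * μ / Real.pi) = 2 * Real.sqrt μ / Real.sqrt (2 * Real.pi) := by
    rw [show 2 * μ / Real.pi = 2 ^ 2 * μ / (2 * Real.pi) by field_simp,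
      Real.sqrt_div (by positivity), Real.sqrt_mul (by positivity), Real.sqrt_sq zero_le_two]
  have hgauss : Real.sqrt (Real.pi / (μ / 2)) = Real.sqrt (2 * Real.pi) / Real.sqrt μ := by
    rw [div_div_eq_mul_div, mul_comm, Real.sqrt_div (by positivity)]
  have hμs : 0 < Real.sqrt μ := Real.sqrt_pos.mpr hμ
  have h2π : 0 < Real.sqrt (2 * Real.pi) := Real.sqrt_pos.mpr (by positivity)
  rw [hnorm, hgauss]
  field_simp

/-- The electron density of the stationary sheath solution at a point with potential
value `φ` (with `φ_w ≤ φ ≤ 0`) equals the electron term of the nonlinear Poisson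
equation. -/
theorem electron_density_identity
    (μ n₀ φw φ : ℝ) (hμ : 0 < μ) (hn₀ : 0 < n₀) (hφw : φw ≤ φ) (hφ : φ ≤ 0) :
    ∫ v in Ioi (-Real.sqrt ((2 / μ) * (φ - φw))),
        n₀ * Real.sqrt (2 * μ / Real.pi) * Real.exp (φ - μ * v ^ 2 / 2) =
      (2 * n₀ / Real.sqrt (2 * Real.pi)) *
        (Real.sqrt (2 * Real.pi) * Real.exp φ -
          ∫ v in Ioi (Real.sqrt (-2 * φw)),
            Real.exp (-(v ^ 2) / 2) * v / Real.sqrt (v ^ 2 + 2 * φ)) :=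
  electron_density_identity_general μ n₀ φw φ hμ hφw hφ
end

section
/- Let μ > 0, n₀ > 0, let φ : [0,1] → ℝ satisfy φ_w = φ(1) ≤ φ(x) ≤ φ(0) = 0 for all x, and let f_i^in : (0,∞) → ℝ be nonnegative with w ↦ w·f_i^in(w) integrable. Assume the zero-current condition at the wall: ∫_{0}^{∞} v·f_i^in(v) dv = √(2/(πμ))·n₀·e^{φ_w}. Then the current density of the stationary sheath solutions vanishes in the whole domain: for every x ∈ [0,1], J^sh(x) = ∫_ℝ v·(f_i^sh(x,v) − f_e^sh(x,v)) dv = 0. -/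
/-! The ion flux `∫ v f_i^sh(x,v) dv` does not depend on `x`: the substitution
`v = √(w² + a²)`, `a = √(-2φ(x))`, which is energy conservation along ion trajectories,
turns it into the incoming flux `∫₀^∞ w f_i^in(w) dw`. The electron flux is an explicit
Gaussian integral over the half-line `v ≥ -b`, with `μ b² / 2 = φ(x) - φ_w`, and equals
`√(2/(πμ)) n₀ e^{φ(x)} e^{φ_w - φ(x)} = √(2/(πμ)) n₀ e^{φ_w}`, also independent of `x`.
The zero-current condition says that the two agree. -/

open MeasureTheory Set Filter Topology Real

section SqrtSubstitution

variable {a : ℝ}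

theorem hasDerivAt_sqrt_sq_add_sq {w : ℝ} (hw : w ≠ 0) :
    HasDerivAt (fun w => √(w ^ 2 + a ^ 2)) (w / √(w ^ 2 + a ^ 2)) w := by
  convert ((hasDerivAt_pow 2 w).add_const (a ^ 2)).sqrt (by positivity) using 1
  field_simp
  ring

theorem injOn_sqrt_sq_add_sq : InjOn (fun w => √(w ^ 2 + a ^ 2)) (Ioi 0) := by
  intro u hu v hv huv
  rw [Real.sqrt_inj (by positivity) (by positivity), add_left_inj] at huv
  exact (pow_left_inj₀ (le_of_lt hu) (le_of_lt hv) two_ne_zero).mp huv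

theorem image_sqrt_sq_add_sq_Ioi (ha : 0 ≤ a) :
    (fun w => √(w ^ 2 + a ^ 2)) '' Ioi 0 = Ioi a := by
  ext v
  constructor
  · rintro ⟨w, hw, rfl⟩
    have : 0 < w ^ 2 := pow_pos hw 2
    rw [mem_Ioi, Real.lt_sqrt ha]
    linarith
  · intro hv
    have hav : a ^ 2 < v ^ 2 := pow_lt_pow_left₀ hv ha two_ne_zero
    refine ⟨√(v ^ 2 - a ^ 2), Real.sqrt_pos.mpr (by linarith), ?_⟩
    show √(√(v ^ 2 - a ^ 2) ^ 2 + a ^ 2) = v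
    rw [Real.sq_sqrt (by linarith), sub_add_cancel, Real.sqrt_sq (ha.trans hv.le)]

theorem abs_div_sqrt_sq_add_sq_smul (g : ℝ → ℝ) {w : ℝ} (hw : 0 < w) :
    |w / √(w ^ 2 + a ^ 2)| • (√(w ^ 2 + a ^ 2) * g √(√(w ^ 2 + a ^ 2) ^ 2 - a ^ 2)) =
      w * g w := by
  have hs : 0 < √(w ^ 2 + a ^ 2) := Real.sqrt_pos.mpr (by positivity)
  rw [Real.sq_sqrt (by positivity), add_sub_cancel_right, Real.sqrt_sq hw.le,
    abs_of_pos (div_pos hw hs), smul_eq_mul]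
  field_simp

theorem integrableOn_Ioi_mul_comp_sqrt_sq_sub_sq_iff (ha : 0 ≤ a) (g : ℝ → ℝ) :
    IntegrableOn (fun v => v * g √(v ^ 2 - a ^ 2)) (Ioi a) ↔
      IntegrableOn (fun w => w * g w) (Ioi 0) := by
  rw [← image_sqrt_sq_add_sq_Ioi ha, integrableOn_image_iff_integrableOn_abs_deriv_smul
    measurableSet_Ioi (fun w hw => (hasDerivAt_sqrt_sq_add_sq (ne_of_gt hw)).hasDerivWithinAt)
    injOn_sqrt_sq_add_sq]
  exact integrableOn_congr_fun (fun w hw => abs_div_sqrt_sq_add_sq_smul g hw) measurableSet_Ioi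

theorem integral_Ioi_mul_comp_sqrt_sq_sub_sq (ha : 0 ≤ a) (g : ℝ → ℝ) :
    ∫ v in Ioi a, v * g √(v ^ 2 - a ^ 2) = ∫ w in Ioi 0, w * g w := by
  rw [← image_sqrt_sq_add_sq_Ioi ha, integral_image_eq_integral_abs_deriv_smul
    measurableSet_Ioi (fun w hw => (hasDerivAt_sqrt_sq_add_sq (ne_of_gt hw)).hasDerivWithinAt)
    injOn_sqrt_sq_add_sq]
  exact setIntegral_congr_fun measurableSet_Ioi fun w hw => abs_div_sqrt_sq_add_sq_smul g hw

end SqrtSubstitution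

theorem integral_Ioi_mul_exp_neg_mul_sq {β : ℝ} (hβ : 0 < β) (t : ℝ) :
    ∫ v in Ioi t, v * exp (-β * v ^ 2) = exp (-β * t ^ 2) / (2 * β) := by
  have hderiv : ∀ v ∈ Ici t,
      HasDerivAt (fun v => -(2 * β)⁻¹ * exp (-β * v ^ 2)) (v * exp (-β * v ^ 2)) v := by
    intro v _
    refine (((hasDerivAt_pow 2 v).const_mul (-β)).exp.const_mul (-(2 * β)⁻¹)).congr_deriv ?_
    field_simp
    ring
  have hlim : Tendsto (fun v => -(2 * β)⁻¹ * exp (-β * v ^ 2)) atTop (𝓝 0) := by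
    have : Tendsto (fun v : ℝ => -β * v ^ 2) atTop atBot :=
      (tendsto_pow_atTop two_ne_zero).const_mul_atTop_of_neg (neg_neg_of_pos hβ)
    simpa using (tendsto_exp_atBot.comp this).const_mul (-(2 * β)⁻¹)
  rw [integral_Ioi_of_hasDerivAt_of_tendsto' hderiv
    (integrable_mul_exp_neg_mul_sq hβ).integrableOn hlim]
  ring

/-- The stationary ion distribution `f_i^sh(x, ·)` at a point where the potential is `p`. -/
noncomputable def ionSheath (fin : ℝ → ℝ) (p v : ℝ) : ℝ :=
  if √(-2 * p) < v then fin √(v ^ 2 + 2 * p) else 0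

/-- The stationary electron distribution `f_e^sh(x, ·)` at a point where the potential is `p`. -/
noncomputable def electronSheath (μ n₀ φw p v : ℝ) : ℝ :=
  if -√((2 / μ) * (p - φw)) ≤ v then n₀ * √(2 * μ / π) * exp (p - μ * v ^ 2 / 2) else 0

section IonFlux

variable {p : ℝ} (fin : ℝ → ℝ)

theorem mul_ionSheath_eq_indicator (hp : p ≤ 0) :
    (fun v => v * ionSheath fin p v) =
      (Ioi √(-2 * p)).indicator (fun v => v * fin √(v ^ 2 - √(-2 * p) ^ 2)) := by
  have hsq : ∀ v : ℝ, v ^ 2 - √(-2 * p) ^ 2 = v ^ 2 + 2 * p := fun v => by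
    rw [Real.sq_sqrt (by linarith)]
    ring
  ext v
  simp only [hsq]
  simp [ionSheath, indicator]

theorem integrable_mul_ionSheath (hp : p ≤ 0) (hfin : IntegrableOn (fun w => w * fin w) (Ioi 0)) :
    Integrable fun v => v * ionSheath fin p v := by
  rw [mul_ionSheath_eq_indicator fin hp, integrable_indicator_iff measurableSet_Ioi,
    integrableOn_Ioi_mul_comp_sqrt_sq_sub_sq_iff (Real.sqrt_nonneg _)]
  exact hfin

theorem integral_mul_ionSheath (hp : p ≤ 0) :
    ∫ v, v * ionSheath fin p v = ∫ w in Ioi 0, w * fin w := by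
  rw [mul_ionSheath_eq_indicator fin hp, integral_indicator measurableSet_Ioi,
    integral_Ioi_mul_comp_sqrt_sq_sub_sq (Real.sqrt_nonneg _)]

end IonFlux

section ElectronFlux

variable {μ : ℝ} (n₀ φw p : ℝ)

theorem mul_electronSheath_eq_indicator :
    (fun v => v * electronSheath μ n₀ φw p v) =
      (Ici (-√((2 / μ) * (p - φw)))).indicator
        (fun v => n₀ * √(2 * μ / π) * exp p * (v * exp (-(μ / 2) * v ^ 2))) := by
  have hexp : ∀ v : ℝ, exp (p - μ * v ^ 2 / 2) = exp p * exp (-(μ / 2) * v ^ 2) := fun v => by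
    rw [← Real.exp_add]
    ring_nf
  ext v
  simp only [electronSheath, indicator, mem_Ici, hexp]
  split_ifs <;> ring

theorem integrable_mul_electronSheath (hμ : 0 < μ) :
    Integrable fun v => v * electronSheath μ n₀ φw p v := by
  rw [mul_electronSheath_eq_indicator n₀ φw p]
  exact ((integrable_mul_exp_neg_mul_sq (half_pos hμ)).const_mul _).indicator measurableSet_Ici

theorem integral_mul_electronSheath (hμ : 0 < μ) (hp : φw ≤ p) :
    ∫ v, v * electronSheath μ n₀ φw p v = √(2 / (π * μ)) * n₀ * exp φw := by
  have hb : -(μ / 2) * (-√((2 / μ) * (p - φw))) ^ 2 = φw - p := by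
    rw [neg_sq, Real.sq_sqrt (by have := sub_nonneg.mpr hp; positivity)]
    field_simp
    ring
  have hsqrt : √(2 * μ / π) = μ * √(2 / (π * μ)) :=
    calc √(2 * μ / π) = √(μ ^ 2 * (2 / (π * μ))) := by congr 1; field_simp
      _ = μ * √(2 / (π * μ)) := by rw [Real.sqrt_mul (sq_nonneg μ), Real.sqrt_sq hμ.le]
  rw [mul_electronSheath_eq_indicator n₀ φw p, integral_indicator measurableSet_Ici,
    integral_Ici_eq_integral_Ioi, integral_const_mul,
    integral_Ioi_mul_exp_neg_mul_sq (half_pos hμ), hb, hsqrt]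
  field_simp
  rw [mul_assoc, ← Real.exp_add, add_sub_cancel]

end ElectronFlux

theorem current_vanishes_everywhere_general
    (μ n₀ φw : ℝ) (hμ : 0 < μ)
    (φ : ℝ → ℝ)
    (hφbound : ∀ x ∈ Icc (0 : ℝ) 1, φw ≤ φ x ∧ φ x ≤ 0)
    (fin : ℝ → ℝ)
    (hint : IntegrableOn (fun w => w * fin w) (Ioi (0 : ℝ)))
    (hzero : ∫ v in Ioi (0 : ℝ), v * fin v =
      Real.sqrt (2 / (Real.pi * μ)) * n₀ * Real.exp φw)
    (fish fesh : ℝ → ℝ → ℝ)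
    (hfish : ∀ x v, fish x v =
      if Real.sqrt (-2 * φ x) < v then fin (Real.sqrt (v ^ 2 + 2 * φ x)) else 0)
    (hfesh : ∀ x v, fesh x v =
      if -Real.sqrt ((2 / μ) * (φ x - φw)) ≤ v then
        n₀ * Real.sqrt (2 * μ / Real.pi) * Real.exp (φ x - μ * v ^ 2 / 2) else 0) :
    ∀ x ∈ Icc (0 : ℝ) 1, ∫ v : ℝ, v * (fish x v - fesh x v) = 0 := by
  intro x hx
  obtain ⟨hwall, hneg⟩ := hφbound x hx
  have hi : fish x = ionSheath fin (φ x) := funext (hfish x)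
  have he : fesh x = electronSheath μ n₀ φw (φ x) := funext (hfesh x)
  simp only [mul_sub, hi, he]
  rw [integral_sub (integrable_mul_ionSheath fin hneg hint)
      (integrable_mul_electronSheath n₀ φw (φ x) hμ),
    integral_mul_ionSheath fin hneg, integral_mul_electronSheath n₀ φw (φ x) hμ hwall, hzero,
    sub_self]

/-- Under the zero-current condition at the wall, the current density of the stationary
sheath solutions vanishes in the whole domain:
`J^sh(x) = ∫_ℝ v·(f_i^sh(x,v) − f_e^sh(x,v)) dv = 0` for every `x ∈ [0,1]`. -/
theorem current_vanishes_everywhere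
    (μ n₀ φw : ℝ) (hμ : 0 < μ) (hn₀ : 0 < n₀)
    (φ : ℝ → ℝ) (hφ0 : φ 0 = 0) (hφ1 : φ 1 = φw)
    (hφbound : ∀ x ∈ Icc (0 : ℝ) 1, φw ≤ φ x ∧ φ x ≤ 0)
    (fin : ℝ → ℝ) (hmeas : Measurable fin)
    (hnonneg : ∀ w ∈ Ioi (0 : ℝ), 0 ≤ fin w)
    (hint : IntegrableOn (fun w => w * fin w) (Ioi (0 : ℝ)))
    (hzero : ∫ v in Ioi (0 : ℝ), v * fin v =
      Real.sqrt (2 / (Real.pi * μ)) * n₀ * Real.exp φw)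
    (fish fesh : ℝ → ℝ → ℝ)
    (hfish : ∀ x v, fish x v =
      if Real.sqrt (-2 * φ x) < v then fin (Real.sqrt (v ^ 2 + 2 * φ x)) else 0)
    (hfesh : ∀ x v, fesh x v =
      if -Real.sqrt ((2 / μ) * (φ x - φw)) ≤ v then
        n₀ * Real.sqrt (2 * μ / Real.pi) * Real.exp (φ x - μ * v ^ 2 / 2) else 0) :
    ∀ x ∈ Icc (0 : ℝ) 1, ∫ v : ℝ, v * (fish x v - fesh x v) = 0 :=
  current_vanishes_everywhere_general μ n₀ φw hμ φ hφbound fin hint hzero fish fesh hfish hfesh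
end

section
/- Let μ ∈ (0,1], let N > 0, I > 0 and ρ₀ < N be real numbers satisfying I/(N − ρ₀) ≤ √(2/(μπ)). Then there exists a unique φ_w ≤ 0 such that (N − ρ₀)·e^{φ_w} = √μ·I·(√(2π) − ∫_{√(−2φ_w)}^{∞} e^{−v²/2} dv). Equivalently, setting n₀ = √(π/2)·(N − ρ₀)/(√(2π) − ∫_{√(−2φ_w)}^{∞} e^{−v²/2} dv), the zero-current condition I = √(2/(πμ))·n₀·e^{φ_w} holds. -/
/-!
With `A = N - ρ₀` and `c = √μ I`, the difference `A e^φ - c (√(2π) - ∫_{√(-2φ)}^∞ e^{-v²/2} dv)`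
is continuous and strictly increasing in `φ`: `e^φ` increases, and the Gaussian tail grows as its
lower limit `√(-2φ)` decreases. Since the tail never exceeds `√(2π)/2`, the difference is negative
for very negative `φ`, while at `φ = 0` it equals `A - c √(2π)/2`, which is nonnegative exactly
by the hypothesis on `I / (N - ρ₀)`. The intermediate value theorem gives the unique zero; the
same bound keeps the denominator of `n₀` positive, which turns the balance into the
zero-current condition.
-/

open MeasureTheory Set Filter

section IntegralIoi

variable {μ : Measure ℝ}

theorem continuous_integral_Ioi {E : Type*} [NormedAddCommGroup E] [NormedSpace ℝ E]
    [NullSingletonClass μ] {f : ℝ → E} (hf : Integrable f μ) :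
    Continuous fun a => ∫ x in Ioi a, f x ∂μ := by
  have h_eq : (fun a => ∫ x in Ioi a, f x ∂μ) =
      fun a => (∫ x in Ioi 0, f x ∂μ) - ∫ x in (0 : ℝ)..a, f x ∂μ := by
    funext a
    rw [← intervalIntegral.integral_Ioi_sub_Ioi' hf.integrableOn hf.integrableOn, sub_sub_cancel]
  rw [h_eq]
  exact continuous_const.sub
    (intervalIntegral.continuous_primitive (fun a b => hf.intervalIntegrable) 0)

theorem antitone_integral_Ioi {f : ℝ → ℝ} (hf : Integrable f μ) (hf_nonneg : ∀ x, 0 ≤ f x) :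
    Antitone fun a => ∫ x in Ioi a, f x ∂μ := fun _ _ hab =>
  setIntegral_mono_set hf.integrableOn (Eventually.of_forall hf_nonneg)
    (Ioi_subset_Ioi hab).eventuallyLE

end IntegralIoi

noncomputable def gaussianTail (a : ℝ) : ℝ := ∫ v in Ioi a, Real.exp (-(v ^ 2) / 2)

theorem integrable_exp_neg_sq_div_two : Integrable fun v : ℝ => Real.exp (-(v ^ 2) / 2) := by
  convert integrable_exp_neg_mul_sq (b := 1 / 2) (by norm_num) using 3 with v
  ring

@[fun_prop]
theorem continuous_gaussianTail : Continuous gaussianTail :=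
  continuous_integral_Ioi integrable_exp_neg_sq_div_two

theorem antitone_gaussianTail : Antitone gaussianTail :=
  antitone_integral_Ioi integrable_exp_neg_sq_div_two fun _ => (Real.exp_pos _).le

theorem gaussianTail_zero : gaussianTail 0 = Real.sqrt (2 * Real.pi) / 2 := by
  have h := integral_gaussian_Ioi (1 / 2)
  rw [show Real.pi / (1 / 2) = 2 * Real.pi by ring] at h
  rw [gaussianTail, ← h]
  congr with v
  ring_nf

theorem gaussianTail_le_of_nonneg {a : ℝ} (ha : 0 ≤ a) :
    gaussianTail a ≤ Real.sqrt (2 * Real.pi) / 2 :=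
  gaussianTail_zero ▸ antitone_gaussianTail ha

theorem sqrt_two_pi_sub_gaussianTail_pos {a : ℝ} (ha : 0 ≤ a) :
    0 < Real.sqrt (2 * Real.pi) - gaussianTail a := by
  have h_pos : 0 < Real.sqrt (2 * Real.pi) := by positivity
  linarith [gaussianTail_le_of_nonneg ha]

section FloatingResidual

variable {A c : ℝ}

/-- Up to a positive factor, the net current into the wall at wall potential `φ`. -/
noncomputable def floatingResidual (A c φ : ℝ) : ℝ :=
  A * Real.exp φ - c * (Real.sqrt (2 * Real.pi) - gaussianTail (Real.sqrt (-2 * φ)))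

theorem continuous_floatingResidual : Continuous (floatingResidual A c) := by
  unfold floatingResidual
  fun_prop

theorem strictMono_floatingResidual (hA : 0 < A) (hc : 0 ≤ c) :
    StrictMono (floatingResidual A c) := by
  intro φ ψ hφψ
  have h_exp : A * Real.exp φ < A * Real.exp ψ :=
    mul_lt_mul_of_pos_left (Real.exp_lt_exp.mpr hφψ) hA
  have h_tail : gaussianTail (Real.sqrt (-2 * φ)) ≤ gaussianTail (Real.sqrt (-2 * ψ)) :=
    antitone_gaussianTail (Real.sqrt_le_sqrt (by linarith))
  unfold floatingResidual
  nlinarith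

theorem floatingResidual_zero : floatingResidual A c 0 = A - c * Real.sqrt (2 * Real.pi) / 2 := by
  simp only [floatingResidual, mul_zero, Real.sqrt_zero, gaussianTail_zero, Real.exp_zero]
  ring

theorem exists_nonpos_floatingResidual_neg (hc : 0 < c) : ∃ φ ≤ 0, floatingResidual A c φ < 0 := by
  have h_half : 0 < c * Real.sqrt (2 * Real.pi) / 2 := by positivity
  have h_small : ∀ᶠ φ in atBot, A * Real.exp φ < c * Real.sqrt (2 * Real.pi) / 2 := by
    have h_lim := Real.tendsto_exp_atBot.const_mul A
    rw [mul_zero] at h_lim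
    exact h_lim.eventually (gt_mem_nhds h_half)
  obtain ⟨φ, hφ_small, hφ_nonpos⟩ := (h_small.and (eventually_le_atBot 0)).exists
  refine ⟨φ, hφ_nonpos, ?_⟩
  have h_tail := gaussianTail_le_of_nonneg (Real.sqrt_nonneg (-2 * φ))
  unfold floatingResidual
  nlinarith

theorem existsUnique_nonpos_floatingResidual_eq_zero (hA : 0 < A) (hc : 0 < c)
    (h_bohm : c * Real.sqrt (2 * Real.pi) ≤ 2 * A) :
    ∃! φ, φ ≤ 0 ∧ floatingResidual A c φ = 0 := by
  obtain ⟨φ₁, hφ₁, h_neg⟩ := exists_nonpos_floatingResidual_neg (A := A) hc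
  have h_zero : 0 ≤ floatingResidual A c 0 := by rw [floatingResidual_zero]; linarith
  obtain ⟨φ, hφ_mem, hφ⟩ := intermediate_value_Icc hφ₁
    continuous_floatingResidual.continuousOn ⟨h_neg.le, h_zero⟩
  exact ⟨φ, ⟨hφ_mem.2, hφ⟩, fun ψ hψ =>
    (strictMono_floatingResidual hA hc.le).injective (hψ.2.trans hφ.symm)⟩

end FloatingResidual

theorem sqrt_mul_mul_sqrt_two_pi_le {μ I A : ℝ} (hμ : 0 < μ) (hA : 0 < A)
    (h : I / A ≤ Real.sqrt (2 / (μ * Real.pi))) :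
    Real.sqrt μ * I * Real.sqrt (2 * Real.pi) ≤ 2 * A := by
  have h_prod : Real.sqrt μ * Real.sqrt (2 / (μ * Real.pi)) * Real.sqrt (2 * Real.pi) = 2 := by
    rw [← Real.sqrt_mul hμ.le, ← Real.sqrt_mul (by positivity),
      show μ * (2 / (μ * Real.pi)) * (2 * Real.pi) = 2 ^ 2 by field_simp,
      Real.sqrt_sq zero_le_two]
  rw [div_le_iff₀ hA] at h
  calc Real.sqrt μ * I * Real.sqrt (2 * Real.pi)
      ≤ Real.sqrt μ * (Real.sqrt (2 / (μ * Real.pi)) * A) * Real.sqrt (2 * Real.pi) := by gcongr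
    _ = 2 * A := by linear_combination A * h_prod

theorem eq_zero_current_of_mul_eq {μ I A D x : ℝ} (hμ : 0 < μ) (hD : D ≠ 0)
    (h : A * x = Real.sqrt μ * I * D) :
    I = Real.sqrt (2 / (Real.pi * μ)) * (Real.sqrt (Real.pi / 2) * A / D) * x := by
  have h_sqrt : Real.sqrt (2 / (Real.pi * μ)) * Real.sqrt (Real.pi / 2) = (Real.sqrt μ)⁻¹ := by
    rw [← Real.sqrt_mul (by positivity), ← Real.sqrt_inv]
    congr 1
    field_simp
  have hμ' : Real.sqrt μ ≠ 0 := (Real.sqrt_pos.mpr hμ).ne'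
  calc I = (Real.sqrt μ)⁻¹ * (Real.sqrt μ * I * D) / D := by field_simp
    _ = _ := by rw [← h, ← h_sqrt]; ring

theorem floating_potential_exists_unique_general
    (μ N I ρ₀ : ℝ) (hμ : μ ∈ Ioc (0 : ℝ) 1) (hI : 0 < I) (hρ₀ : ρ₀ < N)
    (hBohm : I / (N - ρ₀) ≤ Real.sqrt (2 / (μ * Real.pi))) :
    ∃! φw : ℝ, φw ≤ 0 ∧
      (N - ρ₀) * Real.exp φw =
        Real.sqrt μ * I *
          (Real.sqrt (2 * Real.pi) -
            ∫ v in Ioi (Real.sqrt (-2 * φw)), Real.exp (-(v ^ 2) / 2)) ∧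
      I = Real.sqrt (2 / (Real.pi * μ)) *
            (Real.sqrt (Real.pi / 2) * (N - ρ₀) /
              (Real.sqrt (2 * Real.pi) -
                ∫ v in Ioi (Real.sqrt (-2 * φw)), Real.exp (-(v ^ 2) / 2))) *
            Real.exp φw := by
  have hA : 0 < N - ρ₀ := sub_pos.mpr hρ₀
  obtain ⟨φ, ⟨hφ_nonpos, hφ⟩, h_unique⟩ := existsUnique_nonpos_floatingResidual_eq_zero hA
    (mul_pos (Real.sqrt_pos.mpr hμ.1) hI) (sqrt_mul_mul_sqrt_two_pi_le hμ.1 hA hBohm)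
  have h_balance : (N - ρ₀) * Real.exp φ =
      Real.sqrt μ * I * (Real.sqrt (2 * Real.pi) - gaussianTail (Real.sqrt (-2 * φ))) :=
    sub_eq_zero.mp hφ
  have h_denom := (sqrt_two_pi_sub_gaussianTail_pos (Real.sqrt_nonneg (-2 * φ))).ne'
  refine ⟨φ, ⟨hφ_nonpos, h_balance, eq_zero_current_of_mul_eq hμ.1 h_denom h_balance⟩, ?_⟩
  rintro ψ ⟨hψ_nonpos, hψ_balance, -⟩
  exact h_unique ψ ⟨hψ_nonpos, sub_eq_zero.mpr hψ_balance⟩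

/-- Existence and uniqueness of the floating wall potential `φ_w ≤ 0`: under the
condition `I/(N − ρ₀) ≤ √(2/(μπ))`, there is a unique `φ_w ≤ 0` with
`(N − ρ₀)·e^{φ_w} = √μ·I·(√(2π) − ∫_{√(−2φ_w)}^{∞} e^{−v²/2} dv)`; equivalently,
with `n₀ = √(π/2)·(N − ρ₀)/(√(2π) − ∫_{√(−2φ_w)}^{∞} e^{−v²/2} dv)`, the
zero-current condition `I = √(2/(πμ))·n₀·e^{φ_w}` holds. -/
theorem floating_potential_exists_unique
    (μ N I ρ₀ : ℝ) (hμ : μ ∈ Ioc (0 : ℝ) 1) (hN : 0 < N) (hI : 0 < I) (hρ₀ : ρ₀ < N)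
    (hBohm : I / (N - ρ₀) ≤ Real.sqrt (2 / (μ * Real.pi))) :
    ∃! φw : ℝ, φw ≤ 0 ∧
      (N - ρ₀) * Real.exp φw =
        Real.sqrt μ * I *
          (Real.sqrt (2 * Real.pi) -
            ∫ v in Ioi (Real.sqrt (-2 * φw)), Real.exp (-(v ^ 2) / 2)) ∧
      I = Real.sqrt (2 / (Real.pi * μ)) *
            (Real.sqrt (Real.pi / 2) * (N - ρ₀) /
              (Real.sqrt (2 * Real.pi) -
                ∫ v in Ioi (Real.sqrt (-2 * φw)), Real.exp (-(v ^ 2) / 2))) *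
            Real.exp φw :=
  floating_potential_exists_unique_general μ N I ρ₀ hμ hI hρ₀ hBohm
end

section
/- The function h : (−∞, 0] → ℝ defined by h(φ) = e^{φ} / (√(2π) − ∫_{√(−2φ)}^{∞} e^{−v²/2} dv) is well defined (its denominator is strictly positive for φ ≤ 0), continuous, and strictly increasing on (−∞, 0]; moreover h(φ) → 0 as φ → −∞, and h(0) = √(2/π). -/
open MeasureTheory Set Filter

noncomputable def gpdf : ℝ → ℝ := fun v => Real.exp (-(v ^ 2) / 2)

lemma gpdf_eq : gpdf = fun v => Real.exp (-(1/2 : ℝ) * v ^ 2) := by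
  funext v; unfold gpdf; congr 1; ring

lemma gpdf_integrable : Integrable gpdf := by
  rw [gpdf_eq]; exact integrable_exp_neg_mul_sq (by norm_num)

lemma gpdf_total : ∫ v, gpdf v = Real.sqrt (2 * Real.pi) := by
  rw [gpdf_eq, integral_gaussian]
  norm_num
  exact mul_comm _ _

lemma gpdf_half : ∫ v in Ioi (0:ℝ), gpdf v = Real.sqrt (2 * Real.pi) / 2 := by
  rw [gpdf_eq, integral_gaussian_Ioi]
  norm_num
  rw [mul_comm]

noncomputable def gtail : ℝ → ℝ := fun a => ∫ v in Ioi a, gpdf v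

lemma gtail_anti : Antitone gtail := by
  intro a b hab
  exact setIntegral_mono_set gpdf_integrable.integrableOn
    (Eventually.of_forall fun v => Real.exp_nonneg _)
    (HasSubset.Subset.eventuallyLE (Ioi_subset_Ioi hab))

lemma gtail_le (a : ℝ) (ha : 0 ≤ a) : gtail a ≤ Real.sqrt (2 * Real.pi) / 2 := by
  have := gtail_anti ha
  rwa [show gtail 0 = Real.sqrt (2 * Real.pi) / 2 from gpdf_half] at this

lemma gtail_cont : Continuous gtail := by
  have h1 : ∀ a, gtail a = (∫ v, gpdf v) - ∫ v in Iic a, gpdf v := by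
    intro a
    rw [← intervalIntegral.integral_Iic_add_Ioi gpdf_integrable.integrableOn gpdf_integrable.integrableOn]
    unfold gtail; ring
  have h2 : ∀ a : ℝ, (∫ v in Iic a, gpdf v) = (∫ v in Iic 0, gpdf v) + ∫ v in (0:ℝ)..a, gpdf v := by
    intro a
    rw [← intervalIntegral.integral_Iic_sub_Iic gpdf_integrable.integrableOn
      gpdf_integrable.integrableOn]
    ring
  have h3 : gtail = fun a => (∫ v, gpdf v) -
      ((∫ v in Iic 0, gpdf v) + ∫ v in (0:ℝ)..a, gpdf v) := by
    funext a; rw [h1, h2]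
  rw [h3]
  exact continuous_const.sub (continuous_const.add
    (gpdf_integrable.continuous_primitive 0))

/-- Properties of the auxiliary function
`h(φ) = e^{φ} / (√(2π) − ∫_{√(−2φ)}^{∞} e^{−v²/2} dv)` on `(−∞, 0]`:
its denominator is strictly positive, `h` is continuous and strictly increasing on
`(−∞, 0]`, `h(φ) → 0` as `φ → −∞`, and `h(0) = √(2/π)`. -/
theorem auxiliary_function_properties
    (h : ℝ → ℝ)
    (hh : ∀ φ : ℝ, h φ =
      Real.exp φ /
        (Real.sqrt (2 * Real.pi) -
          ∫ v in Ioi (Real.sqrt (-2 * φ)), Real.exp (-(v ^ 2) / 2))) :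
    (∀ φ : ℝ, φ ≤ 0 →
        0 < Real.sqrt (2 * Real.pi) -
          ∫ v in Ioi (Real.sqrt (-2 * φ)), Real.exp (-(v ^ 2) / 2)) ∧
      ContinuousOn h (Iic (0 : ℝ)) ∧
      StrictMonoOn h (Iic (0 : ℝ)) ∧
      Tendsto h atBot (nhds 0) ∧
      h 0 = Real.sqrt (2 / Real.pi) := by
  have sqrt2pi_pos : 0 < Real.sqrt (2 * Real.pi) :=
    Real.sqrt_pos.mpr (by positivity)
  -- denominator
  set D : ℝ → ℝ := fun φ => Real.sqrt (2 * Real.pi) - gtail (Real.sqrt (-2 * φ))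
  have hDval : ∀ φ : ℝ, D φ = Real.sqrt (2 * Real.pi) -
      ∫ v in Ioi (Real.sqrt (-2 * φ)), Real.exp (-(v ^ 2) / 2) := fun φ => rfl
  have hDpos : ∀ φ : ℝ, 0 < D φ := by
    intro φ
    have := gtail_le (Real.sqrt (-2 * φ)) (Real.sqrt_nonneg _)
    have : gtail (Real.sqrt (-2 * φ)) ≤ Real.sqrt (2 * Real.pi) / 2 := this
    simp only [D]
    linarith
  have hDle : ∀ φ : ℝ, D φ ≤ Real.sqrt (2 * Real.pi) := by
    intro φ
    have : 0 ≤ gtail (Real.sqrt (-2 * φ)) :=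
      setIntegral_nonneg measurableSet_Ioi fun v _ => Real.exp_nonneg _
    simp only [D]; linarith
  have hDanti : ∀ φ₁ φ₂ : ℝ, φ₁ ≤ φ₂ → D φ₂ ≤ D φ₁ := by
    intro φ₁ φ₂ hle
    have hs : Real.sqrt (-2 * φ₂) ≤ Real.sqrt (-2 * φ₁) :=
      Real.sqrt_le_sqrt (by linarith)
    have := gtail_anti hs
    simp only [D]; linarith
  have hhD : h = fun φ => Real.exp φ / D φ := by
    funext φ; rw [hh φ]; rfl
  refine ⟨fun φ _ => by rw [← hDval]; exact hDpos φ, ?_, ?_, ?_, ?_⟩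
  · rw [hhD]
    apply Continuous.continuousOn
    exact Real.continuous_exp.div
      (continuous_const.sub (gtail_cont.comp (Real.continuous_sqrt.comp
        (continuous_const.mul continuous_id)))) (fun φ => (hDpos φ).ne')
  · intro φ₁ _ φ₂ _ h12
    rw [hhD]
    have h1 : Real.exp φ₁ / D φ₁ ≤ Real.exp φ₁ / D φ₂ :=
      div_le_div_of_nonneg_left (Real.exp_nonneg _) (hDpos φ₂) (hDanti _ _ h12.le)
    have h2 : Real.exp φ₁ / D φ₂ < Real.exp φ₂ / D φ₂ :=
      (div_lt_div_iff_of_pos_right (hDpos φ₂)).mpr (Real.exp_lt_exp.mpr h12)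
    exact lt_of_le_of_lt h1 h2
  · rw [hhD]
    have hub : ∀ φ : ℝ, Real.exp φ / D φ ≤ Real.exp φ / (Real.sqrt (2 * Real.pi) / 2) := by
      intro φ
      apply div_le_div_of_nonneg_left (Real.exp_nonneg _) (by positivity)
      have := gtail_le (Real.sqrt (-2 * φ)) (Real.sqrt_nonneg _)
      simp only [D]; linarith
    have hlb : ∀ φ : ℝ, 0 ≤ Real.exp φ / D φ := fun φ =>
      div_nonneg (Real.exp_nonneg _) (hDpos φ).le
    have : Tendsto (fun φ => Real.exp φ / (Real.sqrt (2 * Real.pi) / 2)) atBot (nhds 0) := by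
      have := Real.tendsto_exp_atBot.div_const (Real.sqrt (2 * Real.pi) / 2)
      simpa using this
    exact squeeze_zero hlb hub this
  · rw [hh 0]
    have : Real.sqrt (-2 * 0) = 0 := by norm_num
    rw [this]
    have : (∫ v in Ioi (0:ℝ), Real.exp (-(v ^ 2) / 2)) = Real.sqrt (2 * Real.pi) / 2 :=
      gpdf_half
    rw [this, Real.exp_zero]
    rw [show Real.sqrt (2 * Real.pi) - Real.sqrt (2 * Real.pi) / 2
        = Real.sqrt (2 * Real.pi) / 2 by ring]
    rw [Real.sqrt_div (by norm_num : (0:ℝ) ≤ 2), Real.sqrt_mul (by norm_num : (0:ℝ) ≤ 2)]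
    have hpi : (0:ℝ) < Real.sqrt Real.pi := Real.sqrt_pos.mpr Real.pi_pos
    have h2 : Real.sqrt 2 * Real.sqrt 2 = 2 := Real.mul_self_sqrt (by norm_num)
    have h2' : (0:ℝ) < Real.sqrt 2 := Real.sqrt_pos.mpr (by norm_num)
    field_simp
    nlinarith [h2, hpi, h2']
end
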